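/- For every real q>1, every n≥1, every m∈ℕ and every x∈[0,∞), the moments of the q-Szász operator satisfy the recurrence M_{n,q}(t^{m+1};x) = ∑_{j=0}^{m} C(m,j) · (x q^j/[n]_q^{m−j}) · M_{n,q}(t^j; q^{−1}x), where C(m,j) is the ordinary binomial coefficient. -/

import Mathlib

open scoped BigOperators

/-- The `q`-integer `[k]_q = (q^k - 1)/(q - 1)`. -/
noncomputable def qNat (q : ℝ) (k : ℕ) : ℝ := (q ^ k - 1) / (q - 1)

/-- The `q`-factorial `[k]_q! = [1]_q [2]_q ⋯ [k]_q`, with `[0]_q! = 1`. -/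
noncomputable def qFactorial (q : ℝ) : ℕ → ℝ
  | 0 => 1
  | k + 1 => qFactorial q k * qNat q (k + 1)

/-- The `q`-exponential function `e_q(z) = ∑_{k=0}^∞ z^k/[k]_q!`. -/
noncomputable def qExp (q z : ℝ) : ℝ := ∑' k : ℕ, z ^ k / qFactorial q k

/-- The `q`-Szász basis function
`s_{n,k}(q;x) = q^{-k(k-1)/2} ([n]_q^k x^k/[k]_q!) e_q(-[n]_q q^{-k} x)`. -/
noncomputable def qSzaszBasis (q : ℝ) (n k : ℕ) (x : ℝ) : ℝ :=
  (q ^ (k * (k - 1) / 2))⁻¹ * (qNat q n ^ k * x ^ k / qFactorial q k) *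
    qExp q (-(qNat q n) * q ^ (-(k : ℤ)) * x)

/-- The `q`-Szász operator `M_{n,q}(f;x) = ∑_{k=0}^∞ f([k]_q/[n]_q) s_{n,k}(q;x)`. -/
noncomputable def qSzasz (q : ℝ) (n : ℕ) (f : ℝ → ℝ) (x : ℝ) : ℝ :=
  ∑' k : ℕ, f (qNat q k / qNat q n) * qSzaszBasis q n k x

/-- The weight `w_0(x) = 1`, `w_p(x) = (1 + x^p)⁻¹` for `p ≥ 1`. -/
noncomputable def weight (p : ℕ) (x : ℝ) : ℝ := if p = 0 then 1 else (1 + x ^ p)⁻¹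

/-- The weighted sup-norm `‖f‖_p = sup_{x ≥ 0} w_p(x)|f(x)|`. -/
noncomputable def wnorm (p : ℕ) (f : ℝ → ℝ) : ℝ :=
  ⨆ x : Set.Ici (0 : ℝ), weight p x.1 * |f x.1|

/-- Membership in the space `C_p`: `f` is continuous on `[0,∞)` and `w_p f` is
uniformly continuous and bounded on `[0,∞)`. -/
def MemCp (p : ℕ) (f : ℝ → ℝ) : Prop :=
  ContinuousOn f (Set.Ici 0) ∧
  UniformContinuousOn (fun x => weight p x * f x) (Set.Ici 0) ∧
  ∃ M : ℝ, ∀ x ∈ Set.Ici (0 : ℝ), |weight p x * f x| ≤ M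

/-- The second difference `Δ_h² f(x) = f(x+2h) - 2f(x+h) + f(x)`. -/
noncomputable def delta2 (f : ℝ → ℝ) (h x : ℝ) : ℝ := f (x + 2 * h) - 2 * f (x + h) + f x

/-- The second modulus of smoothness `ω_p²(f;δ) = sup_{0<h≤δ} ‖Δ_h² f‖_p`. -/
noncomputable def omega2 (p : ℕ) (f : ℝ → ℝ) (δ : ℝ) : ℝ :=
  ⨆ h : {h : ℝ // 0 < h ∧ h ≤ δ}, wnorm p (fun x => delta2 f h.1 x)

/-- The (first) modulus of continuity on `[0,∞)`:
`ω(g;δ) = sup {|g(s)-g(t)| : s,t ≥ 0, |s-t| ≤ δ}`. -/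
noncomputable def omega1 (g : ℝ → ℝ) (δ : ℝ) : ℝ :=
  sSup {d : ℝ | ∃ s t : ℝ, 0 ≤ s ∧ 0 ≤ t ∧ |s - t| ≤ δ ∧ d = |g s - g t|}

/-- The `q`-derivative `(D_q g)(x) = (g(qx) - g(x))/((q-1)x)`. -/
noncomputable def qDeriv (q : ℝ) (g : ℝ → ℝ) (x : ℝ) : ℝ := (g (q * x) - g x) / ((q - 1) * x)

/-- The `q`-Stirling-type numbers: `S_q(0,0)=1`, `S_q(m,0)=0` for `m>0`,
`S_q(m,j)=0` for `m<j`, and `S_q(m+1,j)=[j]_q S_q(m,j) + S_q(m,j-1)`. -/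
noncomputable def qStirling (q : ℝ) : ℕ → ℕ → ℝ
  | 0, 0 => 1
  | 0, _ + 1 => 0
  | _ + 1, 0 => 0
  | m + 1, j + 1 => qNat q (j + 1) * qStirling q m (j + 1) + qStirling q m j

/-!
Since `[k+1]_q = 1 + q [k]_q`, the basis functions satisfy
`([k+1]_q/[n]_q) s_{n,k+1}(q;x) = x s_{n,k}(q;x/q)`: the factor `q^{-k}` in the argument of `e_q`
absorbs the extra power of `q^{-1}`, and `[k+1]_q!` absorbs `[k+1]_q`. Dropping the vanishing
`k = 0` term of `M_{n,q}(t^{m+1};x)` and shifting the index therefore gives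
`M_{n,q}(t^{m+1};x) = x ∑_k ([k+1]_q/[n]_q)^m s_{n,k}(q;x/q)`, and expanding
`[k+1]_q/[n]_q = q [k]_q/[n]_q + 1/[n]_q` binomially yields the recurrence. The interchange of the
series with the finite sum is justified by `1/[k]_q! ≤ q^{-k(k-1)/2}`, which makes every moment
series converge absolutely.
-/

open Filter Topology

theorem summable_pow_mul_pow_triangle {A r : ℝ} (hr : |r| < 1) :
    Summable (fun k : ℕ => A ^ k * r ^ (k * (k - 1) / 2)) := by
  refine summable_of_ratio_norm_eventually_le (r := 2⁻¹) (by norm_num) ?_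
  have hlim : Tendsto (fun k : ℕ => ‖A * r ^ k‖) atTop (𝓝 0) := by
    rw [← tendsto_zero_iff_norm_tendsto_zero]
    simpa using (tendsto_pow_atTop_nhds_zero_of_abs_lt_one hr).const_mul A
  filter_upwards [hlim.eventually_le_const (by norm_num : (0 : ℝ) < 2⁻¹)] with k hk
  calc ‖A ^ (k + 1) * r ^ ((k + 1) * (k + 1 - 1) / 2)‖
      = ‖A * r ^ k‖ * ‖A ^ k * r ^ (k * (k - 1) / 2)‖ := by
        rw [Nat.triangle_succ, ← norm_mul]; ring_nf
    _ ≤ 2⁻¹ * ‖A ^ k * r ^ (k * (k - 1) / 2)‖ := by gcongr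

section

variable {q : ℝ} (hq : 1 < q)
include hq

theorem qNat_nonneg (k : ℕ) : 0 ≤ qNat q k :=
  div_nonneg (by linarith [one_le_pow₀ (n := k) hq.le]) (by linarith)

theorem qNat_pos {k : ℕ} (hk : 1 ≤ k) : 0 < qNat q k :=
  div_pos (by linarith [one_lt_pow₀ hq (n := k) (by omega)]) (by linarith)

theorem qNat_succ (k : ℕ) : qNat q (k + 1) = 1 + q * qNat q k := by
  have : q - 1 ≠ 0 := by linarith
  simp only [qNat]
  field_simp
  ring

theorem qNat_le (k : ℕ) : qNat q k ≤ q ^ k / (q - 1) :=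
  div_le_div_of_nonneg_right (by linarith) (by linarith)

theorem pow_le_qNat_succ (k : ℕ) : q ^ k ≤ qNat q (k + 1) := by
  rw [qNat, le_div_iff₀ (by linarith), pow_succ]
  nlinarith [one_le_pow₀ (n := k) hq.le]

theorem qFactorial_pos (k : ℕ) : 0 < qFactorial q k := by
  induction k with
  | zero => simp [qFactorial]
  | succ k ih => exact mul_pos ih (qNat_pos hq (by omega))

theorem pow_triangle_le_qFactorial (k : ℕ) : q ^ (k * (k - 1) / 2) ≤ qFactorial q k := by
  induction k with
  | zero => simp [qFactorial]
  | succ k ih =>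
    rw [Nat.triangle_succ, pow_add, qFactorial]
    exact mul_le_mul ih (pow_le_qNat_succ hq k) (by positivity) (qFactorial_pos hq k).le

theorem inv_qFactorial_le (k : ℕ) : (qFactorial q k)⁻¹ ≤ q⁻¹ ^ (k * (k - 1) / 2) := by
  rw [inv_pow]
  exact inv_anti₀ (by positivity) (pow_triangle_le_qFactorial hq k)

theorem summable_qExp (z : ℝ) : Summable (fun i : ℕ => z ^ i / qFactorial q i) := by
  have hq' : |q⁻¹| < 1 := by
    rw [abs_inv, abs_of_pos (by linarith)]
    exact inv_lt_one_of_one_lt₀ hq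
  refine .of_norm_bounded (summable_pow_mul_pow_triangle (A := |z|) hq') fun i => ?_
  rw [Real.norm_eq_abs, abs_div, abs_pow, abs_of_pos (qFactorial_pos hq i), div_eq_mul_inv]
  gcongr
  exact inv_qFactorial_le hq i

theorem abs_qExp_le {z c : ℝ} (hz : |z| ≤ c) : |qExp q z| ≤ qExp q c := by
  have hbound (i : ℕ) : ‖z ^ i / qFactorial q i‖ ≤ c ^ i / qFactorial q i := by
    rw [Real.norm_eq_abs, abs_div, abs_pow, abs_of_pos (qFactorial_pos hq i)]
    exact div_le_div_of_nonneg_right (pow_le_pow_left₀ (abs_nonneg z) hz i)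
      (qFactorial_pos hq i).le
  have hnorm : Summable (fun i : ℕ => ‖z ^ i / qFactorial q i‖) := by
    simpa [abs_div, abs_pow, abs_of_pos (qFactorial_pos hq _)] using summable_qExp hq |z|
  calc |qExp q z| ≤ ∑' i : ℕ, ‖z ^ i / qFactorial q i‖ := norm_tsum_le_tsum_norm hnorm
    _ ≤ qExp q c := hnorm.tsum_le_tsum hbound (summable_qExp hq c)

theorem abs_qSzaszBasis_le (n k : ℕ) (y : ℝ) :
    |qSzaszBasis q n k y| ≤
      qExp q (qNat q n * |y|) * ((qNat q n * |y|) ^ k * (q⁻¹ * q⁻¹) ^ (k * (k - 1) / 2)) := by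
  have hN := qNat_nonneg hq n
  have hexp : |qExp q (-qNat q n * q ^ (-(k : ℤ)) * y)| ≤ qExp q (qNat q n * |y|) := by
    refine abs_qExp_le hq ?_
    rw [abs_mul, abs_mul, abs_neg, abs_of_nonneg hN, abs_of_pos (by positivity)]
    have : q ^ (-(k : ℤ)) ≤ 1 := zpow_le_one_of_nonpos₀ hq.le (by omega)
    have : 0 ≤ qNat q n * |y| := by positivity
    nlinarith
  have hfac := inv_qFactorial_le hq k
  rw [qSzaszBasis, abs_mul, abs_mul, abs_of_pos (by positivity), abs_div,
    abs_of_pos (qFactorial_pos hq k), abs_mul, abs_pow, abs_pow, abs_of_nonneg hN,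
    ← inv_pow, div_eq_mul_inv, mul_comm]
  calc |qExp q _| * (q⁻¹ ^ (k * (k - 1) / 2) * (qNat q n ^ k * |y| ^ k * (qFactorial q k)⁻¹))
      ≤ qExp q (qNat q n * |y|) *
          (q⁻¹ ^ (k * (k - 1) / 2) * (qNat q n ^ k * |y| ^ k * q⁻¹ ^ (k * (k - 1) / 2))) := by
        gcongr
        · exact mul_nonneg (by positivity)
            (mul_nonneg (by positivity) (inv_nonneg.mpr (qFactorial_pos hq k).le))
        · exact (abs_nonneg _).trans hexp
    _ = _ := by ring

theorem summable_qNat_pow_mul_qSzaszBasis (p n : ℕ) (y : ℝ) :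
    Summable (fun k : ℕ => qNat q k ^ p * qSzaszBasis q n k y) := by
  have hq' : |q⁻¹ * q⁻¹| < 1 := by
    rw [abs_mul, abs_inv, abs_of_pos (by linarith)]
    nlinarith [inv_lt_one_of_one_lt₀ hq, inv_pos.mpr (by linarith : 0 < q)]
  refine .of_norm_bounded
    ((summable_pow_mul_pow_triangle (A := q ^ p * (qNat q n * |y|)) hq').mul_left
      (qExp q (qNat q n * |y|) / (q - 1) ^ p)) fun k => ?_
  rw [Real.norm_eq_abs, abs_mul, abs_pow, abs_of_nonneg (qNat_nonneg hq k)]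
  calc qNat q k ^ p * |qSzaszBasis q n k y|
      ≤ (q ^ k / (q - 1)) ^ p * (qExp q (qNat q n * |y|) *
          ((qNat q n * |y|) ^ k * (q⁻¹ * q⁻¹) ^ (k * (k - 1) / 2))) := by
        gcongr
        · exact qNat_nonneg hq k
        · exact qNat_le hq k
        · exact abs_qSzaszBasis_le hq n k y
    _ = _ := by ring

theorem summable_qNat_div_pow_mul_qSzaszBasis (p n : ℕ) (y : ℝ) :
    Summable (fun k : ℕ => (qNat q k / qNat q n) ^ p * qSzaszBasis q n k y) :=
  ((summable_qNat_pow_mul_qSzaszBasis hq p n y).div_const (qNat q n ^ p)).congr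
    fun k => by ring

theorem qNat_succ_div_pow (n k m : ℕ) :
    (qNat q (k + 1) / qNat q n) ^ m =
      ∑ j ∈ Finset.range (m + 1),
        (m.choose j : ℝ) * (q ^ j / qNat q n ^ (m - j)) * (qNat q k / qNat q n) ^ j := by
  rw [qNat_succ hq, add_div, add_comm, add_pow]
  refine Finset.sum_congr rfl fun j _ => ?_
  ring

variable {n : ℕ} (hn : 1 ≤ n)
include hn

theorem qNat_succ_div_mul_qSzaszBasis_succ (k : ℕ) (x : ℝ) :
    qNat q (k + 1) / qNat q n * qSzaszBasis q n (k + 1) x = x * qSzaszBasis q n k (x / q) := by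
  have hN := (qNat_pos hq hn).ne'
  have hk := (qNat_pos hq (Nat.le_add_left 1 k)).ne'
  have hq0 : q ≠ 0 := by positivity
  have harg : q ^ (-((k + 1 : ℕ) : ℤ)) * x = q ^ (-(k : ℤ)) * (x / q) := by
    rw [Nat.cast_succ, neg_add, zpow_add₀ hq0, zpow_neg_one]
    ring
  rw [qSzaszBasis, qSzaszBasis, mul_assoc _ _ x, harg, Nat.triangle_succ, qFactorial, pow_add,
    div_pow]
  field_simp
  ring

theorem qSzasz_pow_succ (m : ℕ) (x : ℝ) :
    qSzasz q n (fun t => t ^ (m + 1)) x =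
      x * ∑' k : ℕ, (qNat q (k + 1) / qNat q n) ^ m * qSzaszBasis q n k (x / q) := by
  have hzero : qNat q 0 = 0 := by simp [qNat]
  rw [qSzasz, (summable_qNat_div_pow_mul_qSzaszBasis hq (m + 1) n x).tsum_eq_zero_add, hzero,
    zero_div, zero_pow m.succ_ne_zero, zero_mul, zero_add, ← tsum_mul_left]
  refine tsum_congr fun k => ?_
  rw [pow_succ, mul_assoc, qNat_succ_div_mul_qSzaszBasis_succ hq hn]
  ring

end

theorem qSzasz_moment_recurrence_general (q : ℝ) (hq : 1 < q) (n : ℕ) (hn : 1 ≤ n)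
    (m : ℕ) (x : ℝ) :
    qSzasz q n (fun t => t ^ (m + 1)) x =
      ∑ j ∈ Finset.range (m + 1),
        (Nat.choose m j : ℝ) * (x * q ^ j / qNat q n ^ (m - j)) *
          qSzasz q n (fun t => t ^ j) (x / q) := by
  rw [qSzasz_pow_succ hq hn, ← tsum_mul_left]
  calc ∑' k, x * ((qNat q (k + 1) / qNat q n) ^ m * qSzaszBasis q n k (x / q))
      = ∑' k, ∑ j ∈ Finset.range (m + 1),
          (m.choose j : ℝ) * (x * q ^ j / qNat q n ^ (m - j)) * ((qNat q k / qNat q n) ^ j * qSzaszBasis q n k (x / q)) :=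
        tsum_congr fun k => by
          rw [qNat_succ_div_pow hq, Finset.sum_mul, Finset.mul_sum]
          exact Finset.sum_congr rfl fun j _ => by ring
    _ = _ := by
        rw [Summable.tsum_finsetSum fun j _ =>
          (summable_qNat_div_pow_mul_qSzaszBasis hq j n (x / q)).mul_left _]
        simp only [tsum_mul_left, qSzasz]

/-- recurrence formula for the moments of the `q`-Szász operator. -/
theorem qSzasz_moment_recurrence (q : ℝ) (hq : 1 < q) (n : ℕ) (hn : 1 ≤ n)
    (m : ℕ) (x : ℝ) (hx : 0 ≤ x) :
    qSzasz q n (fun t => t ^ (m + 1)) x =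
      ∑ j ∈ Finset.range (m + 1),
        (Nat.choose m j : ℝ) * (x * q ^ j / qNat q n ^ (m - j)) *
          qSzasz q n (fun t => t ^ j) (x / q) :=
  qSzasz_moment_recurrence_general q hq n hn m x
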